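/- arXiv:2510.27340 — 2 statements merged into one kernel-verified Lean document; each statement's English description precedes it below -/
import Mathlib

section
/- Under Assumption 1, for any g, g' ∈ ℝ^M with h = g − g' and any pair of indices i ≠ j, the μ-measure of the intersection of Laguerre cells satisfies μ(L_i(g) ∩ L_j(g')) ≤ m₂ · κ_{d−1} R^{d−1} · |h_i − h_j| / ‖y_i − y_j‖, where κ_{d−1} is the Lebesgue volume of the unit ball of ℝ^{d−1} and m₂ is an upper bound on the density of μ. -/
open MeasureTheory Finset

noncomputable section

namespace DRAG

abbrev Esp (d : ℕ) := EuclideanSpace ℝ (Fin d)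

/-- Assumption 1 of the paper. -/
structure Assumption1 (d M : ℕ) (R αh : ℝ) (μ : Measure (Esp d))
    (y : Fin M → Esp d) (f : Esp d → ℝ) (m₁ m₂ : ℝ) : Prop where
  hd : 0 < d
  hM : 0 < M
  hR : 0 < R
  hα0 : 0 < αh
  hα1 : αh ≤ 1
  isProb : IsProbabilityMeasure μ
  hf_nonneg : ∀ x, 0 ≤ f x
  hdensity : μ = (volume : Measure (Esp d)).withDensity (fun x => ENNReal.ofReal (f x))
  hsupp : Function.support f ⊆ Metric.closedBall 0 R
  hm₁ : 0 < m₁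
  hm₁₂ : m₁ ≤ m₂
  hbounds : ∀ x ∈ Function.support f, m₁ ≤ f x ∧ f x ≤ m₂
  hHolder : ∃ L : ℝ, 0 ≤ L ∧ ∀ x x', |f x - f x'| ≤ L * ‖x - x'‖ ^ αh
  hy : ∀ j, y j ∈ Metric.closedBall (0 : Esp d) R
  hy_inj : Function.Injective y

variable {d M : ℕ}

/-- The (c,ε)-transform of a vector `g`. -/
def gce (y : Fin M → Esp d) (ε : ℝ) (g : Fin M → ℝ) (x : Esp d) : ℝ :=
  if ε = 0 then ⨅ j, ((1 : ℝ) / 2 * ‖x - y j‖ ^ 2 - g j)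
  else -ε * Real.log (∑ j, Real.exp ((-((1 : ℝ) / 2) * ‖x - y j‖ ^ 2 + g j) / ε) * (1 / (M : ℝ)))

/-- The semi-dual objective `H_ε`. -/
def Hsd (μ : Measure (Esp d)) (y : Fin M → Esp d) (ε : ℝ) (g : Fin M → ℝ) : ℝ :=
  -∫ x, gce y ε g x ∂μ - ∑ j, g j * (1 / (M : ℝ))

/-- The softmax weights `χ_j^ε(x, g)`. -/
def chi (y : Fin M → Esp d) (ε : ℝ) (x : Esp d) (g : Fin M → ℝ) (j : Fin M) : ℝ :=
  Real.exp ((-((1 : ℝ) / 2) * ‖x - y j‖ ^ 2 + g j) / ε) * (1 / (M : ℝ)) /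
    ∑ k, Real.exp ((-((1 : ℝ) / 2) * ‖x - y k‖ ^ 2 + g k) / ε) * (1 / (M : ℝ))

/-- The stochastic gradient `∇_g h_ε(x, g)`. -/
def gradh (y : Fin M → Esp d) (ε : ℝ) (x : Esp d) (g : Fin M → ℝ) : Fin M → ℝ :=
  fun j => chi y ε x g j - 1 / (M : ℝ)

/-- The gradient `∇H_ε(g)`. -/
def gradH (μ : Measure (Esp d)) (y : Fin M → Esp d) (ε : ℝ) (g : Fin M → ℝ) : Fin M → ℝ :=
  fun j => (∫ x, chi y ε x g j ∂μ) - 1 / (M : ℝ)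

/-- Euclidean norm on `Fin M → ℝ`. -/
def enorm' (u : Fin M → ℝ) : ℝ := Real.sqrt (∑ j, (u j) ^ 2)

/-- Orthogonal projection onto the hyperplane orthogonal to the all-ones vector. -/
def projPerp (u : Fin M → ℝ) : Fin M → ℝ := fun j => u j - (∑ i, u i) / (M : ℝ)

/-- Euclidean norm of the component orthogonal to the all-ones vector. -/
def vnorm (u : Fin M → ℝ) : ℝ := enorm' (projPerp u)

/-- Inner product of the components orthogonal to the all-ones vector. -/
def vinner (u v : Fin M → ℝ) : ℝ := ∑ j, projPerp u j * projPerp v j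

/-- Sup-norm of the component orthogonal to the all-ones vector. -/
def vnormInf (u : Fin M → ℝ) : ℝ := ⨆ j, |projPerp u j|

/-- The projection set `C_u`. -/
def Cu [NeZero M] (R : ℝ) (y : Fin M → Esp d) : Set (Fin M → ℝ) :=
  {g | g 0 = 0 ∧ ∀ j, |g j| ≤ R * ‖y 0 - y j‖}

/-- The projection set `C_∞ = [0, 2R²]^M`. -/
def Cinf (M : ℕ) (R : ℝ) : Set (Fin M → ℝ) :=
  {g | ∀ j, g j ∈ Set.Icc (0 : ℝ) (2 * R ^ 2)}

/-- The step sizes `γ_k = γ₁ k^{-b}`. -/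
def gam (γ₁ b : ℝ) (k : ℕ) : ℝ := γ₁ * (k : ℝ) ^ (-b)

/-- The regularization parameters `ε₀ = 1`, `ε_k = k^{-a}`. -/
def epsSeq (a : ℝ) (k : ℕ) : ℝ := if k = 0 then 1 else (k : ℝ) ^ (-a)

/-- Averaged iterates `ḡ_k = (1/(k+1)) ∑_{i=0}^k g_i`. -/
def gbar {Ω : Type*} (g : ℕ → Ω → Fin M → ℝ) (k : ℕ) (ω : Ω) : Fin M → ℝ :=
  ((k : ℝ) + 1)⁻¹ • ∑ i ∈ Finset.range (k + 1), g i ω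

/-- Laguerre cells. -/
def Lag (y : Fin M → Esp d) (g : Fin M → ℝ) (j : Fin M) : Set (Esp d) :=
  {x | ∀ k, (1 : ℝ) / 2 * ‖x - y j‖ ^ 2 - g j ≤ (1 : ℝ) / 2 * ‖x - y k‖ ^ 2 - g k}

/-- Euclidean diameter of a set of potentials. -/
def ediam (C : Set (Fin M → ℝ)) : ℝ :=
  sSup ((fun p : (Fin M → ℝ) × (Fin M → ℝ) => enorm' (p.1 - p.2)) '' (C ×ˢ C))

lemma slab_vol (n : ℕ) (a b R : ℝ) (hR : 0 ≤ R) :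
    volume {z : Esp (n+1) | z 0 ∈ Set.Icc a b ∧ ‖z‖ ≤ R}
      ≤ ENNReal.ofReal (b - a) * (ENNReal.ofReal (R ^ n) * volume (Metric.ball (0 : Esp n) 1)) := by
  set F := (MeasurableEquiv.toLp 2 (Fin (n+1) → ℝ)).symm with hF
  set F' := (MeasurableEquiv.toLp 2 (Fin n → ℝ)).symm with hF'
  set e := MeasurableEquiv.piFinSuccAbove (fun _ : Fin (n+1) => ℝ) 0 with he
  set T : Set (Fin n → ℝ) := ⇑F'.symm ⁻¹' (Metric.closedBall (0 : Esp n) R) with hT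
  have hTmeas : MeasurableSet T := F'.symm.measurable Metric.isClosed_closedBall.measurableSet
  have hAmeas : MeasurableSet (Set.Icc a b ×ˢ T) := measurableSet_Icc.prod hTmeas
  have hsub : {z : Esp (n+1) | z 0 ∈ Set.Icc a b ∧ ‖z‖ ≤ R}
      ⊆ ⇑F ⁻¹' (⇑e ⁻¹' (Set.Icc a b ×ˢ T)) := by
    intro z hz
    obtain ⟨hz0, hzn⟩ := hz
    refine Set.mem_preimage.2 (Set.mem_preimage.2 ⟨hz0, ?_⟩)
    have hmem : (e (F z)).2 ∈ T ↔ ‖(F'.symm ((e (F z)).2) : Esp n)‖ ≤ R := by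
      rw [hT, Set.mem_preimage, Metric.mem_closedBall, dist_zero_right]
    rw [hmem]
    refine le_trans ?_ hzn
    rw [EuclideanSpace.norm_eq, EuclideanSpace.norm_eq]
    apply Real.sqrt_le_sqrt
    have htail : ∑ k : Fin n, ‖F'.symm ((e (F z)).2) k‖ ^ 2 = ∑ k : Fin n, ‖z k.succ‖ ^ 2 := by
      refine Finset.sum_congr rfl fun k _ => ?_
      have hk : F'.symm ((e (F z)).2) k = z ((0 : Fin (n+1)).succAbove k) := rfl
      rw [hk, Fin.zero_succAbove]
    rw [htail, Fin.sum_univ_succ]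
    exact le_add_of_nonneg_left (by positivity)
  calc volume {z : Esp (n+1) | z 0 ∈ Set.Icc a b ∧ ‖z‖ ≤ R}
      ≤ volume (⇑F ⁻¹' (⇑e ⁻¹' (Set.Icc a b ×ˢ T))) := measure_mono hsub
    _ = volume (⇑e ⁻¹' (Set.Icc a b ×ˢ T)) :=
        (EuclideanSpace.volume_preserving_symm_measurableEquiv_toLp _).measure_preimage
          ((e.measurable hAmeas).nullMeasurableSet)
    _ = volume (Set.Icc a b ×ˢ T) :=
        (volume_preserving_piFinSuccAbove (fun _ : Fin (n+1) => ℝ) 0).measure_preimage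
          hAmeas.nullMeasurableSet
    _ = volume (Set.Icc a b) * volume T := by
        rw [Measure.volume_eq_prod]; exact Measure.prod_prod _ _
    _ = ENNReal.ofReal (b - a) * volume (Metric.closedBall (0 : Esp n) R) := by
        rw [Real.volume_Icc,
          (MeasurePreserving.symm _
            (EuclideanSpace.volume_preserving_symm_measurableEquiv_toLp (Fin n))).measure_preimage
            Metric.isClosed_closedBall.measurableSet.nullMeasurableSet]
    _ = ENNReal.ofReal (b - a) * (ENNReal.ofReal (R ^ n) * volume (Metric.ball (0 : Esp n) 1)) := by
        rw [Measure.addHaar_closedBall _ _ hR, finrank_euclideanSpace_fin]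

theorem statement14
    {d M : ℕ} [NeZero M] {R αh : ℝ}
    {μ : Measure (Esp d)} {y : Fin M → Esp d} {f : Esp d → ℝ} {m₁ m₂ : ℝ}
    (A : Assumption1 d M R αh μ y f m₁ m₂)
    (g g' : Fin M → ℝ) (i j : Fin M) (hij : i ≠ j) :
    (μ (Lag y g i ∩ Lag y g' j)).toReal
      ≤ m₂ * (volume (Metric.ball (0 : Esp (d - 1)) 1)).toReal * R ^ (d - 1) *
          (|(g i - g' i) - (g j - g' j)| / ‖y i - y j‖) := by
  obtain ⟨n, rfl⟩ : ∃ n, d = n + 1 := ⟨d - 1, (Nat.succ_pred_eq_of_pos A.hd).symm⟩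
  simp only [Nat.add_sub_cancel]
  have hyne : y j - y i ≠ 0 := sub_ne_zero.2 fun h => hij (A.hy_inj h.symm)
  set s : ℝ := ‖y j - y i‖ with hs_def
  have hs : 0 < s := norm_pos_iff.2 hyne
  set u : Esp (n+1) := s⁻¹ • (y j - y i) with hu_def
  have hu : ‖u‖ = 1 := by
    rw [hu_def, norm_smul, norm_inv, norm_norm, inv_mul_cancel₀ hs.ne']
  have hcard : Module.finrank ℝ (Esp (n+1)) = Fintype.card (Fin (n+1)) := by simp
  have hON : Orthonormal ℝ (({0} : Set (Fin (n+1))).restrict (fun _ => u)) := by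
    constructor
    · intro _; exact hu
    · intro a b hab
      exact absurd (Subtype.ext ((Set.eq_of_mem_singleton a.2).trans
        (Set.eq_of_mem_singleton b.2).symm)) hab
  obtain ⟨b, hb⟩ := hON.exists_orthonormalBasis_extension_of_card_eq hcard
  have hb0 : b 0 = u := hb 0 rfl
  set c : ℝ := (‖y j‖ ^ 2 - ‖y i‖ ^ 2) / 2 with hc_def
  set aa : ℝ := s⁻¹ * (g' i - g' j + c) with haa_def
  set bb : ℝ := s⁻¹ * (g i - g j + c) with hbb_def
  have hslab : ∀ x ∈ Lag y g i ∩ Lag y g' j, inner ℝ u x ∈ Set.Icc aa bb := by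
    rintro x ⟨hx1, hx2⟩
    have h1 := hx1 j
    have h2 := hx2 i
    simp only [@norm_sub_sq_real (Esp (n+1))] at h1 h2
    have hinner : (inner ℝ u x : ℝ) = s⁻¹ * (inner ℝ x (y j) - inner ℝ x (y i)) := by
      rw [hu_def, real_inner_smul_left, inner_sub_left, real_inner_comm (y j) x,
        real_inner_comm (y i) x]
    constructor
    · rw [hinner, haa_def]
      apply mul_le_mul_of_nonneg_left _ (inv_nonneg.2 hs.le)
      rw [hc_def]; linarith
    · rw [hinner, hbb_def]
      apply mul_le_mul_of_nonneg_left _ (inv_nonneg.2 hs.le)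
      rw [hc_def]; linarith
  -- measurability
  have hLag : ∀ (g : Fin M → ℝ) (i : Fin M), MeasurableSet (Lag y g i) := by
    intro g i
    have : Lag y g i = ⋂ k, {x : Esp (n+1) |
        1/2*‖x - y i‖^2 - g i ≤ 1/2*‖x - y k‖^2 - g k} := by
      ext x; simp [Lag, Set.mem_iInter]
    rw [this]
    exact MeasurableSet.iInter fun k =>
      (isClosed_le (by fun_prop) (by fun_prop)).measurableSet
  set S := Lag y g i ∩ Lag y g' j with hS_def
  have hSmeas : MeasurableSet S := (hLag g i).inter (hLag g' j)
  have hm₂ : (0:ℝ) ≤ m₂ := (A.hm₁.trans_le A.hm₁₂).le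
  -- measure bound via density
  have hμS : μ S ≤ ENNReal.ofReal m₂ * volume (Metric.closedBall (0:Esp (n+1)) R ∩ S) := by
    rw [A.hdensity, withDensity_apply _ hSmeas]
    calc ∫⁻ x in S, ENNReal.ofReal (f x) ∂volume
        ≤ ∫⁻ x in S, (Metric.closedBall (0:Esp (n+1)) R).indicator
            (fun _ => ENNReal.ofReal m₂) x ∂volume := by
          apply lintegral_mono
          intro x
          by_cases hx : f x = 0
          · simp [hx]
          · have hxs : x ∈ Function.support f := hx
            rw [Set.indicator_of_mem (A.hsupp hxs)]
            exact ENNReal.ofReal_le_ofReal (A.hbounds x hxs).2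
      _ = ENNReal.ofReal m₂ * volume (Metric.closedBall (0:Esp (n+1)) R ∩ S) := by
          rw [lintegral_indicator Metric.isClosed_closedBall.measurableSet, setLIntegral_const,
            Measure.restrict_apply Metric.isClosed_closedBall.measurableSet]
  -- slab volume bound
  have hmeasW : MeasurableSet {z : Esp (n+1) | z 0 ∈ Set.Icc aa bb ∧ ‖z‖ ≤ R} := by
    have heq : {z : Esp (n+1) | z 0 ∈ Set.Icc aa bb ∧ ‖z‖ ≤ R}
        = ((fun z : Esp (n+1) => z 0) ⁻¹' Set.Icc aa bb) ∩ Metric.closedBall 0 R := by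
      ext z
      simp [Metric.mem_closedBall, dist_zero_right]
    rw [heq]
    exact (((measurable_pi_apply (0 : Fin (n+1))).comp
      (MeasurableEquiv.toLp 2 (Fin (n+1) → ℝ)).symm.measurable) measurableSet_Icc).inter
      Metric.isClosed_closedBall.measurableSet
  have hvol : volume (Metric.closedBall (0:Esp (n+1)) R ∩ S)
      ≤ ENNReal.ofReal (bb - aa) *
        (ENNReal.ofReal (R ^ n) * volume (Metric.ball (0:Esp n) 1)) := by
    refine le_trans (measure_mono (?_ :
      _ ⊆ ⇑b.repr ⁻¹' {z : Esp (n+1) | z 0 ∈ Set.Icc aa bb ∧ ‖z‖ ≤ R})) ?_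
    · rintro x ⟨hxB, hxS⟩
      refine ⟨?_, ?_⟩
      · have h0 : b.repr x 0 = inner ℝ u x := by rw [b.repr_apply_apply, hb0]
        rw [h0]; exact hslab x hxS
      · rw [LinearIsometryEquiv.norm_map]
        exact mem_closedBall_zero_iff.1 hxB
    · rw [b.measurePreserving_repr.measure_preimage hmeasW.nullMeasurableSet]
      exact slab_vol n aa bb R A.hR.le
  -- combine
  set vBt : ℝ := (volume (Metric.ball (0 : Esp n) 1)).toReal with hvBt
  have hball : volume (Metric.ball (0 : Esp n) 1) = ENNReal.ofReal vBt := by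
    rw [hvBt, ENNReal.ofReal_toReal measure_ball_lt_top.ne]
  have hΔ : bb - aa ≤ |(g i - g' i) - (g j - g' j)| / ‖y i - y j‖ := by
    have : bb - aa = s⁻¹ * ((g i - g' i) - (g j - g' j)) := by
      rw [haa_def, hbb_def]; ring
    rw [this, norm_sub_rev, ← hs_def, div_eq_inv_mul]
    exact mul_le_mul_of_nonneg_left (le_abs_self _) (inv_nonneg.2 hs.le)
  have habs : (0:ℝ) ≤ |(g i - g' i) - (g j - g' j)| / ‖y i - y j‖ :=
    div_nonneg (abs_nonneg _) (norm_nonneg _)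
  have hfinal : μ S ≤ ENNReal.ofReal
      (m₂ * vBt * R ^ n * (|(g i - g' i) - (g j - g' j)| / ‖y i - y j‖)) := by
    calc μ S ≤ ENNReal.ofReal m₂ * volume (Metric.closedBall (0:Esp (n+1)) R ∩ S) := hμS
      _ ≤ ENNReal.ofReal m₂ * (ENNReal.ofReal (bb - aa) *
            (ENNReal.ofReal (R ^ n) * volume (Metric.ball (0:Esp n) 1))) :=
          mul_le_mul_right hvol _
      _ ≤ ENNReal.ofReal m₂ * (ENNReal.ofReal (|(g i - g' i) - (g j - g' j)| / ‖y i - y j‖) *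
            (ENNReal.ofReal (R ^ n) * ENNReal.ofReal vBt)) := by
          rw [← hball]
          exact mul_le_mul_right (mul_le_mul_left (ENNReal.ofReal_le_ofReal hΔ) _) _
      _ = ENNReal.ofReal
          (m₂ * vBt * R ^ n * (|(g i - g' i) - (g j - g' j)| / ‖y i - y j‖)) := by
          rw [← ENNReal.ofReal_mul (pow_nonneg A.hR.le n), ← ENNReal.ofReal_mul habs,
            ← ENNReal.ofReal_mul hm₂]
          congr 1
          ring
  refine ENNReal.toReal_le_of_le_ofReal ?_ hfinal
  exact mul_nonneg (mul_nonneg (mul_nonneg hm₂ ENNReal.toReal_nonneg)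
    (pow_nonneg A.hR.le n)) habs

end DRAG
end
end

section
/- Under Assumption 1, for every real p with 1 ≤ p < ∞ and all g, g' ∈ ℝ^M: ∫_{ℝ^d} ‖T(g)(x) − T(g')(x)‖^p dμ(x) ≤ (2R)^{p−1} · m₂ · κ_{d−1} R^{d−1} · (M−1) · ‖g − g'‖₁, where T(g)(x) = y_{j(g,x)} with j(g,x) the (μ-almost everywhere unique) index minimizing j ↦ ½‖x−y_j‖² − g_j, ‖·‖₁ denotes the ℓ¹ norm on ℝ^M, κ_{d−1} is the Lebesgue volume of the unit ball of ℝ^{d−1}, and m₂ is an upper bound on the density of μ. -/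
open MeasureTheory Finset

noncomputable section

namespace DRAG

variable {d M : ℕ}

open scoped RealInnerProductSpace

private lemma norm_le_iff_sum_sq {m : ℕ} {R : ℝ} (hR : 0 ≤ R) (z : EuclideanSpace ℝ (Fin m)) :
    ‖z‖ ≤ R ↔ ∑ i, z i ^ 2 ≤ R ^ 2 := by
  rw [EuclideanSpace.norm_eq]
  have hs : 0 ≤ ∑ i, z i ^ 2 := Finset.sum_nonneg fun i _ => sq_nonneg _
  simp only [Real.norm_eq_abs, sq_abs]
  constructor
  · intro h
    have h2 := pow_le_pow_left₀ (Real.sqrt_nonneg _) h 2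
    rwa [Real.sq_sqrt hs] at h2
  · intro h
    calc Real.sqrt (∑ i, z i ^ 2) ≤ Real.sqrt (R ^ 2) := Real.sqrt_le_sqrt h
    _ = R := Real.sqrt_sq hR

private lemma volume_slab_unit {n : ℕ} {R : ℝ} (hR : 0 ≤ R)
    {e : Esp (n + 1)} (he : ‖e‖ = 1) (a b : ℝ) :
    volume {x : Esp (n + 1) | ⟪e, x⟫ ∈ Set.Icc a b ∧ ‖x‖ ≤ R}
      ≤ ENNReal.ofReal (b - a) *
        (ENNReal.ofReal (R ^ n) * volume (Metric.ball (0 : Esp n) 1)) := by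
  classical
  have hcard : Module.finrank ℝ (Esp (n + 1)) = Fintype.card (Fin (n + 1)) := by
    simp [finrank_euclideanSpace]
  have horth : Orthonormal ℝ (({0} : Set (Fin (n + 1))).restrict (fun _ => e)) := by
    rw [orthonormal_iff_ite]
    rintro ⟨i, hi⟩ ⟨j, hj⟩
    have hij : (⟨i, hi⟩ : ({0} : Set (Fin (n + 1)))) = ⟨j, hj⟩ :=
      Subtype.ext ((Set.mem_singleton_iff.mp hi).trans (Set.mem_singleton_iff.mp hj).symm)
    rw [if_pos hij]
    show ⟪e, e⟫ = 1
    rw [real_inner_self_eq_norm_sq, he]; norm_num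
  obtain ⟨B, hB⟩ := horth.exists_orthonormalBasis_extension_of_card_eq hcard
  have hB0 : B 0 = e := hB 0 (Set.mem_singleton 0)
  set S' : Set (EuclideanSpace ℝ (Fin (n + 1))) := {z | z 0 ∈ Set.Icc a b ∧ ‖z‖ ≤ R} with hS'
  have hS'meas : MeasurableSet S' := by
    rw [hS', Set.setOf_and]
    exact (((measurable_pi_apply 0).comp (WithLp.measurable_ofLp (p := 2) (X := Fin (n + 1) → ℝ))) measurableSet_Icc).inter
      (measurableSet_le (measurable_norm (α := EuclideanSpace ℝ (Fin (n+1)))) measurable_const)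
  have h1 : volume {x : Esp (n + 1) | ⟪e, x⟫ ∈ Set.Icc a b ∧ ‖x‖ ≤ R} = volume S' := by
    have hpre : {x : Esp (n + 1) | ⟪e, x⟫ ∈ Set.Icc a b ∧ ‖x‖ ≤ R} = B.repr ⁻¹' S' := by
      ext x
      simp only [Set.mem_preimage, hS', Set.mem_setOf_eq, LinearIsometryEquiv.norm_map]
      rw [B.repr_apply_apply, hB0]
    rw [hpre, B.measurePreserving_repr.measure_preimage hS'meas.nullMeasurableSet]
  set T : Set (Fin (n + 1) → ℝ) := {w | w 0 ∈ Set.Icc a b ∧ ∑ i, w i ^ 2 ≤ R ^ 2} with hT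
  have hTmeas : MeasurableSet T := by
    rw [hT, Set.setOf_and]
    exact ((measurable_pi_apply 0) measurableSet_Icc).inter
      ((Finset.measurable_sum _ fun i _ => (measurable_pi_apply i).pow_const 2) measurableSet_Iic)
  have h2 : volume S' = volume T := by
    have hpre : S' = (MeasurableEquiv.toLp 2 (Fin (n + 1) → ℝ)).symm ⁻¹' T := by
      ext z
      simp only [hS', hT, Set.mem_preimage, Set.mem_setOf_eq]
      rw [norm_le_iff_sum_sq hR]
      rfl
    rw [hpre,
      (EuclideanSpace.volume_preserving_symm_measurableEquiv_toLp _).measure_preimage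
        hTmeas.nullMeasurableSet]
  set Bn : Set (Fin n → ℝ) := {w | ∑ i, w i ^ 2 ≤ R ^ 2} with hBn
  have hBnmeas : MeasurableSet Bn :=
    (Finset.measurable_sum _ fun i _ => (measurable_pi_apply i).pow_const 2) measurableSet_Iic
  have h3 : volume T ≤ ENNReal.ofReal (b - a) * volume Bn := by
    have hmp := MeasureTheory.volume_preserving_piFinSuccAbove (fun _ : Fin (n + 1) => ℝ) 0
    have hsub : T ⊆ (MeasurableEquiv.piFinSuccAbove (fun _ : Fin (n + 1) => ℝ) 0) ⁻¹'
        (Set.Icc a b ×ˢ Bn) := by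
      rintro w ⟨hw1, hw2⟩
      refine Set.mem_preimage.mpr (Set.mem_prod.mpr ⟨?_, ?_⟩)
      · exact hw1
      · show ∑ i, w ((0 : Fin (n + 1)).succAbove i) ^ 2 ≤ R ^ 2
        rw [Fin.sum_univ_succ (f := fun i => w i ^ 2)] at hw2
        simp only [Fin.succAbove_zero]
        nlinarith [sq_nonneg (w 0)]
    calc volume T ≤ volume ((MeasurableEquiv.piFinSuccAbove (fun _ : Fin (n + 1) => ℝ) 0) ⁻¹'
          (Set.Icc a b ×ˢ Bn)) := measure_mono hsub
      _ = volume (Set.Icc a b ×ˢ Bn) :=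
          hmp.measure_preimage ((measurableSet_Icc.prod hBnmeas).nullMeasurableSet)
      _ = volume (Set.Icc a b) * volume Bn := by
          rw [Measure.volume_eq_prod, Measure.prod_prod]
      _ = ENNReal.ofReal (b - a) * volume Bn := by rw [Real.volume_Icc]
  have h4 : volume Bn = ENNReal.ofReal (R ^ n) * volume (Metric.ball (0 : Esp n) 1) := by
    have hpre : (MeasurableEquiv.toLp 2 (Fin n → ℝ)).symm ⁻¹' Bn
        = Metric.closedBall (0 : Esp n) R := by
      ext z
      simp only [Set.mem_preimage, hBn, Set.mem_setOf_eq, mem_closedBall_zero_iff]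
      rw [norm_le_iff_sum_sq hR]
      rfl
    calc volume Bn
        = volume ((MeasurableEquiv.toLp 2 (Fin n → ℝ)).symm ⁻¹' Bn) :=
          ((EuclideanSpace.volume_preserving_symm_measurableEquiv_toLp _).measure_preimage
            hBnmeas.nullMeasurableSet).symm
      _ = volume (Metric.closedBall (0 : Esp n) R) := by rw [hpre]
      _ = ENNReal.ofReal (R ^ n) * volume (Metric.ball (0 : Esp n) 1) := by
          rw [Measure.addHaar_closedBall _ _ hR, finrank_euclideanSpace_fin]
  calc volume {x : Esp (n + 1) | ⟪e, x⟫ ∈ Set.Icc a b ∧ ‖x‖ ≤ R}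
      = volume T := by rw [h1, h2]
    _ ≤ ENNReal.ofReal (b - a) * volume Bn := h3
    _ = ENNReal.ofReal (b - a) * (ENNReal.ofReal (R ^ n) * volume (Metric.ball (0 : Esp n) 1)) := by
        rw [h4]

private lemma volume_slab {n : ℕ} {R : ℝ} (hR : 0 ≤ R)
    {u : Esp (n + 1)} (hu : u ≠ 0) (a b : ℝ) :
    volume {x : Esp (n + 1) | ⟪u, x⟫ ∈ Set.Icc a b ∧ ‖x‖ ≤ R}
      ≤ ENNReal.ofReal ((b - a) / ‖u‖) *
        (ENNReal.ofReal (R ^ n) * volume (Metric.ball (0 : Esp n) 1)) := by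
  have hn : (0 : ℝ) < ‖u‖ := norm_pos_iff.mpr hu
  have he : ‖(‖u‖⁻¹ : ℝ) • u‖ = 1 := norm_smul_inv_norm hu
  have hset : {x : Esp (n + 1) | ⟪u, x⟫ ∈ Set.Icc a b ∧ ‖x‖ ≤ R}
      = {x : Esp (n + 1) | ⟪(‖u‖⁻¹ : ℝ) • u, x⟫ ∈ Set.Icc (a / ‖u‖) (b / ‖u‖) ∧ ‖x‖ ≤ R} := by
    ext x
    have ht : ⟪(‖u‖⁻¹ : ℝ) • u, x⟫ = ⟪u, x⟫ / ‖u‖ := by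
      rw [real_inner_smul_left, inv_mul_eq_div]
    simp only [Set.mem_setOf_eq, Set.mem_Icc, ht]
    rw [div_le_div_iff_of_pos_right hn, div_le_div_iff_of_pos_right hn]
  rw [hset]
  have := volume_slab_unit hR he (a / ‖u‖) (b / ‖u‖)
  rwa [div_sub_div_same] at this

theorem statement16
    {d M : ℕ} [NeZero M] {R αh : ℝ}
    {μ : Measure (Esp d)} {y : Fin M → Esp d} {f : Esp d → ℝ} {m₁ m₂ : ℝ}
    (A : Assumption1 d M R αh μ y f m₁ m₂)
    (T : (Fin M → ℝ) → Esp d → Esp d)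
    (hT : ∀ gv : Fin M → ℝ, ∀ x : Esp d, ∃ j : Fin M, T gv x = y j ∧
      ∀ k : Fin M, (1 : ℝ) / 2 * ‖x - y j‖ ^ 2 - gv j ≤ (1 : ℝ) / 2 * ‖x - y k‖ ^ 2 - gv k) :
    ∀ p : ℝ, 1 ≤ p → ∀ g g' : Fin M → ℝ,
      ∫ x, ‖T g x - T g' x‖ ^ p ∂μ
        ≤ (2 * R) ^ (p - 1) * m₂ * (volume (Metric.ball (0 : Esp (d - 1)) 1)).toReal *
            R ^ (d - 1) * ((M : ℝ) - 1) * ∑ j, |g j - g' j| := by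
  intro p hp g g'
  haveI := A.isProb
  obtain ⟨n, rfl⟩ : ∃ n, d = n + 1 := ⟨d - 1, (Nat.succ_pred_eq_of_pos A.hd).symm⟩
  show ∫ x, ‖T g x - T g' x‖ ^ p ∂μ
      ≤ (2 * R) ^ (p - 1) * m₂ * (volume (Metric.ball (0 : Esp n) 1)).toReal *
          R ^ n * ((M : ℝ) - 1) * ∑ j, |g j - g' j|
  have hR0 : (0 : ℝ) < R := A.hR
  have hm₂ : (0 : ℝ) < m₂ := lt_of_lt_of_le A.hm₁ A.hm₁₂
  set κ : ℝ := (volume (Metric.ball (0 : Esp n) 1)).toReal with hκ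
  have hκ0 : 0 ≤ κ := ENNReal.toReal_nonneg
  set δ : Fin M → ℝ := fun j => g j - g' j with hδ
  set S : Fin M → Fin M → Set (Esp (n + 1)) := fun j k =>
    {x | g k - g j ≤ (1 : ℝ) / 2 * ‖x - y k‖ ^ 2 - (1 : ℝ) / 2 * ‖x - y j‖ ^ 2 ∧
      (1 : ℝ) / 2 * ‖x - y k‖ ^ 2 - (1 : ℝ) / 2 * ‖x - y j‖ ^ 2 ≤ g' k - g' j} with hS
  have hq : ∀ j k : Fin M, Continuous fun x : Esp (n + 1) =>
      (1 : ℝ) / 2 * ‖x - y k‖ ^ 2 - (1 : ℝ) / 2 * ‖x - y j‖ ^ 2 := by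
    intro j k; fun_prop
  have hSmeas : ∀ j k, MeasurableSet (S j k) := by
    intro j k
    rw [hS]
    exact (measurableSet_le measurable_const (hq j k).measurable).inter
      (measurableSet_le (hq j k).measurable measurable_const)
  -- pointwise bound
  have h2R : (0 : ℝ) ≤ 2 * R := by linarith
  have hpt : ∀ x, ‖T g x - T g' x‖ ^ p ≤ (2 * R) ^ (p - 1) *
      ∑ j, ∑ k, ‖y j - y k‖ * (S j k).indicator (fun _ => (1 : ℝ)) x := by
    intro x
    obtain ⟨j, hj, hjmin⟩ := hT g x
    obtain ⟨k, hk, hkmin⟩ := hT g' x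
    rw [hj, hk]
    have hxS : x ∈ S j k := ⟨by linarith [hjmin k], by linarith [hkmin j]⟩
    have hnn : ∀ j' k' : Fin M,
        0 ≤ ‖y j' - y k'‖ * (S j' k').indicator (fun _ => (1 : ℝ)) x := fun j' k' =>
      mul_nonneg (norm_nonneg _) (Set.indicator_nonneg (fun _ _ => zero_le_one) x)
    have hsum : ‖y j - y k‖ ≤
        ∑ j', ∑ k', ‖y j' - y k'‖ * (S j' k').indicator (fun _ => (1 : ℝ)) x := by
      have h1 : ‖y j - y k‖ = ‖y j - y k‖ * (S j k).indicator (fun _ => (1 : ℝ)) x := by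
        rw [Set.indicator_of_mem hxS, mul_one]
      rw [h1]
      calc ‖y j - y k‖ * (S j k).indicator (fun _ => (1 : ℝ)) x
          ≤ ∑ k', ‖y j - y k'‖ * (S j k').indicator (fun _ => (1 : ℝ)) x :=
            Finset.single_le_sum (fun k' _ => hnn j k') (Finset.mem_univ k)
        _ ≤ ∑ j', ∑ k', ‖y j' - y k'‖ * (S j' k').indicator (fun _ => (1 : ℝ)) x :=
            Finset.single_le_sum
              (fun j' _ => Finset.sum_nonneg fun k' _ => hnn j' k') (Finset.mem_univ j)
    have hnorm2R : ‖y j - y k‖ ≤ 2 * R := by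
      have h1 := mem_closedBall_zero_iff.mp (A.hy j)
      have h2 := mem_closedBall_zero_iff.mp (A.hy k)
      calc ‖y j - y k‖ ≤ ‖y j‖ + ‖y k‖ := norm_sub_le _ _
        _ ≤ 2 * R := by linarith
    have hkey : ‖y j - y k‖ ^ p ≤ (2 * R) ^ (p - 1) * ‖y j - y k‖ := by
      rcases eq_or_lt_of_le (norm_nonneg (y j - y k)) with h0 | h0
      · rw [← h0, Real.zero_rpow (by linarith : p ≠ 0), mul_zero]
      · have hsplit : ‖y j - y k‖ ^ p = ‖y j - y k‖ ^ (p - 1) * ‖y j - y k‖ := by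
          rw [Real.rpow_sub_one h0.ne', div_mul_cancel₀ _ h0.ne']
        rw [hsplit]
        exact mul_le_mul_of_nonneg_right
          (Real.rpow_le_rpow (norm_nonneg _) hnorm2R (by linarith)) (norm_nonneg _)
    calc ‖y j - y k‖ ^ p ≤ (2 * R) ^ (p - 1) * ‖y j - y k‖ := hkey
      _ ≤ (2 * R) ^ (p - 1) *
          ∑ j', ∑ k', ‖y j' - y k'‖ * (S j' k').indicator (fun _ => (1 : ℝ)) x :=
        mul_le_mul_of_nonneg_left hsum (Real.rpow_nonneg h2R _)
  -- integrability of the RHS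
  have hint : ∀ j k, Integrable ((S j k).indicator (fun _ => (1 : ℝ))) μ := fun j k =>
    (integrable_const (1 : ℝ)).indicator (hSmeas j k)
  have hintsum : Integrable (fun x =>
      ∑ j, ∑ k, ‖y j - y k‖ * (S j k).indicator (fun _ => (1 : ℝ)) x) μ :=
    integrable_finset_sum _ fun j _ =>
      integrable_finset_sum _ fun k _ => (hint j k).const_mul _
  have hintRHS : Integrable (fun x => (2 * R) ^ (p - 1) *
      ∑ j, ∑ k, ‖y j - y k‖ * (S j k).indicator (fun _ => (1 : ℝ)) x) μ :=
    hintsum.const_mul _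
  -- value of the RHS integral
  have hI : ∫ x, (2 * R) ^ (p - 1) *
        ∑ j, ∑ k, ‖y j - y k‖ * (S j k).indicator (fun _ => (1 : ℝ)) x ∂μ
      = (2 * R) ^ (p - 1) * ∑ j, ∑ k, ‖y j - y k‖ * (μ (S j k)).toReal := by
    rw [integral_const_mul]
    congr 1
    rw [integral_finset_sum _ fun j _ =>
      integrable_finset_sum _ fun k _ => (hint j k).const_mul _]
    refine Finset.sum_congr rfl fun j _ => ?_
    rw [integral_finset_sum _ fun k _ => (hint j k).const_mul _]
    refine Finset.sum_congr rfl fun k _ => ?_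
    rw [integral_const_mul, integral_indicator_const (1 : ℝ) (hSmeas j k), smul_eq_mul, mul_one, measureReal_def]
  -- measure bound μ s ≤ m₂ vol (s ∩ ball)
  have hmu : ∀ s : Set (Esp (n + 1)), MeasurableSet s →
      μ s ≤ ENNReal.ofReal m₂ * volume (s ∩ Metric.closedBall 0 R) := by
    intro s hs
    rw [A.hdensity, withDensity_apply _ hs]
    calc ∫⁻ x in s, ENNReal.ofReal (f x) ∂volume
        ≤ ∫⁻ x in s,
            (Metric.closedBall (0 : Esp (n + 1)) R).indicator
              (fun _ => ENNReal.ofReal m₂) x ∂volume := by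
          refine lintegral_mono fun x => ?_
          by_cases hx : f x = 0
          · simp [hx]
          · have hx' : x ∈ Function.support f := hx
            rw [Set.indicator_of_mem (A.hsupp hx')]
            exact ENNReal.ofReal_le_ofReal (A.hbounds x hx').2
      _ = ENNReal.ofReal m₂ * volume (s ∩ Metric.closedBall 0 R) := by
          rw [lintegral_indicator measurableSet_closedBall, setLIntegral_const,
            Measure.restrict_apply measurableSet_closedBall, Set.inter_comm, mul_comm]
  -- term bound
  have hterm : ∀ j k : Fin M, ‖y j - y k‖ * (μ (S j k)).toReal
      ≤ m₂ * (κ * (R ^ n * max (δ j - δ k) 0)) := by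
    intro j k
    by_cases hjk : j = k
    · subst hjk
      simp only [sub_self, norm_zero, zero_mul, max_self, mul_zero]
      exact le_rfl
    · set u : Esp (n + 1) := y j - y k with hu
      have hune : u ≠ 0 := sub_ne_zero.mpr fun h => hjk (A.hy_inj h)
      have hupos : (0 : ℝ) < ‖u‖ := norm_pos_iff.mpr hune
      set c₀ : ℝ := ((‖y k‖ ^ 2) - (‖y j‖ ^ 2)) / 2 with hc₀
      have hqx : ∀ x : Esp (n + 1),
          (1 : ℝ) / 2 * ‖x - y k‖ ^ 2 - (1 : ℝ) / 2 * ‖x - y j‖ ^ 2 = ⟪u, x⟫ + c₀ := by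
        intro x
        have e1 := norm_sub_sq_real x (y k)
        have e2 := norm_sub_sq_real x (y j)
        have e3 : ⟪u, x⟫ = ⟪x, y j⟫ - ⟪x, y k⟫ := by
          rw [hu, inner_sub_left, real_inner_comm (y j) x, real_inner_comm (y k) x]
        rw [e3, hc₀]
        linarith
      have hsub : S j k ∩ Metric.closedBall 0 R ⊆
          {x : Esp (n + 1) | ⟪u, x⟫ ∈ Set.Icc (g k - g j - c₀) (g' k - g' j - c₀) ∧ ‖x‖ ≤ R} := by
        rintro x ⟨⟨h1, h2⟩, hball⟩
        have hq1 := hqx x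
        exact ⟨⟨by linarith, by linarith⟩, mem_closedBall_zero_iff.mp hball⟩
      have hvol : volume (S j k ∩ Metric.closedBall 0 R)
          ≤ ENNReal.ofReal (max (δ j - δ k) 0 / ‖u‖) *
            (ENNReal.ofReal (R ^ n) * volume (Metric.ball (0 : Esp n) 1)) := by
        have h1 := volume_slab (le_of_lt hR0) hune (g k - g j - c₀) (g' k - g' j - c₀)
        have h2 : ((g' k - g' j - c₀) - (g k - g j - c₀)) = δ j - δ k := by
          rw [hδ]; ring
        have h3 : ENNReal.ofReal ((δ j - δ k) / ‖u‖)
            = ENNReal.ofReal (max (δ j - δ k) 0 / ‖u‖) := by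
          rcases le_total (δ j - δ k) 0 with h | h
          · rw [max_eq_right h]
            simp [ENNReal.ofReal_eq_zero.mpr (div_nonpos_of_nonpos_of_nonneg h hupos.le)]
          · rw [max_eq_left h]
        calc volume (S j k ∩ Metric.closedBall 0 R)
            ≤ volume {x : Esp (n + 1) |
                ⟪u, x⟫ ∈ Set.Icc (g k - g j - c₀) (g' k - g' j - c₀) ∧ ‖x‖ ≤ R} :=
              measure_mono hsub
          _ ≤ ENNReal.ofReal (max (δ j - δ k) 0 / ‖u‖) *
              (ENNReal.ofReal (R ^ n) * volume (Metric.ball (0 : Esp n) 1)) := by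
              rw [← h3, ← h2]; exact h1
      have hfin : ENNReal.ofReal m₂ * (ENNReal.ofReal (max (δ j - δ k) 0 / ‖u‖) *
          (ENNReal.ofReal (R ^ n) * volume (Metric.ball (0 : Esp n) 1))) ≠ ⊤ :=
        ENNReal.mul_ne_top ENNReal.ofReal_ne_top
          (ENNReal.mul_ne_top ENNReal.ofReal_ne_top
            (ENNReal.mul_ne_top ENNReal.ofReal_ne_top measure_ball_lt_top.ne))
      have hmub : (μ (S j k)).toReal
          ≤ m₂ * (max (δ j - δ k) 0 / ‖u‖ * (R ^ n * κ)) := by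
        have hle : μ (S j k) ≤ ENNReal.ofReal m₂ * (ENNReal.ofReal (max (δ j - δ k) 0 / ‖u‖) *
            (ENNReal.ofReal (R ^ n) * volume (Metric.ball (0 : Esp n) 1))) :=
          le_trans (hmu _ (hSmeas j k)) (mul_le_mul_right hvol _)
        have := ENNReal.toReal_mono hfin hle
        rwa [ENNReal.toReal_mul, ENNReal.toReal_mul, ENNReal.toReal_mul,
          ENNReal.toReal_ofReal hm₂.le,
          ENNReal.toReal_ofReal (div_nonneg (le_max_right _ _) hupos.le),
          ENNReal.toReal_ofReal (pow_nonneg hR0.le n)] at this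
      calc ‖y j - y k‖ * (μ (S j k)).toReal
          ≤ ‖u‖ * (m₂ * (max (δ j - δ k) 0 / ‖u‖ * (R ^ n * κ))) :=
            mul_le_mul_of_nonneg_left hmub (norm_nonneg _)
        _ = m₂ * (max (δ j - δ k) 0 * (R ^ n * κ)) * (‖u‖ / ‖u‖) := by ring
        _ = m₂ * (κ * (R ^ n * max (δ j - δ k) 0)) := by
            rw [div_self hupos.ne', mul_one]; ring
  -- counting lemma
  have hM1 : (1 : ℕ) ≤ M := A.hM
  have hcast : ((M - 1 : ℕ) : ℝ) = (M : ℝ) - 1 := by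
    rw [Nat.cast_sub hM1, Nat.cast_one]
  have hcount : ∑ j, ∑ k, max (δ j - δ k) 0 ≤ ((M : ℝ) - 1) * ∑ j, |δ j| := by
    have habs : ∀ j, ∑ k, |δ j - δ k| ≤ ((M : ℝ) - 1) * |δ j| + ((∑ k, |δ k|) - |δ j|) := by
      intro j
      rw [← Finset.add_sum_erase _ _ (Finset.mem_univ j), sub_self, abs_zero, zero_add]
      calc ∑ k ∈ Finset.univ.erase j, |δ j - δ k|
          ≤ ∑ k ∈ Finset.univ.erase j, (|δ j| + |δ k|) :=
            Finset.sum_le_sum fun k _ => abs_sub _ _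
        _ = ((Finset.univ.erase j).card : ℝ) * |δ j| + ∑ k ∈ Finset.univ.erase j, |δ k| := by
            rw [Finset.sum_add_distrib, Finset.sum_const, nsmul_eq_mul]
        _ = ((M : ℝ) - 1) * |δ j| + ((∑ k, |δ k|) - |δ j|) := by
            rw [Finset.card_erase_of_mem (Finset.mem_univ j),
              Finset.sum_erase_eq_sub (Finset.mem_univ j), Finset.card_univ, Fintype.card_fin,
              hcast]
    have h2 : (2 : ℝ) * (∑ j, ∑ k, max (δ j - δ k) 0) = ∑ j, ∑ k, |δ j - δ k| := by
      have hswap : (∑ j, ∑ k, max (δ j - δ k) 0) = ∑ j, ∑ k, max (δ k - δ j) 0 :=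
        Finset.sum_comm
      rw [two_mul]
      nth_rewrite 2 [hswap]
      rw [← Finset.sum_add_distrib]
      refine Finset.sum_congr rfl fun j _ => ?_
      rw [← Finset.sum_add_distrib]
      refine Finset.sum_congr rfl fun k _ => ?_
      rw [show δ k - δ j = -(δ j - δ k) by ring]
      exact max_zero_add_max_neg_zero_eq_abs_self _
    have h3 : ∑ j, ∑ k, |δ j - δ k| ≤ 2 * (((M : ℝ) - 1) * ∑ j, |δ j|) := by
      calc ∑ j, ∑ k, |δ j - δ k|
          ≤ ∑ j, (((M : ℝ) - 1) * |δ j| + ((∑ k, |δ k|) - |δ j|)) :=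
            Finset.sum_le_sum fun j _ => habs j
        _ = 2 * (((M : ℝ) - 1) * ∑ j, |δ j|) := by
            rw [Finset.sum_add_distrib, ← Finset.mul_sum, Finset.sum_sub_distrib,
              Finset.sum_const, Finset.card_univ, Fintype.card_fin, nsmul_eq_mul]
            ring
    linarith
  -- final chain
  have hstep1 : ∫ x, ‖T g x - T g' x‖ ^ p ∂μ ≤ ∫ x, (2 * R) ^ (p - 1) *
      ∑ j, ∑ k, ‖y j - y k‖ * (S j k).indicator (fun _ => (1 : ℝ)) x ∂μ :=
    integral_mono_of_nonneg (ae_of_all _ fun x => Real.rpow_nonneg (norm_nonneg _) p)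
      hintRHS (ae_of_all _ hpt)
  have hstep2 : (2 * R) ^ (p - 1) * ∑ j, ∑ k, ‖y j - y k‖ * (μ (S j k)).toReal
      ≤ (2 * R) ^ (p - 1) * (m₂ * (κ * (R ^ n * (((M : ℝ) - 1) * ∑ j, |δ j|)))) := by
    refine mul_le_mul_of_nonneg_left ?_ (Real.rpow_nonneg h2R _)
    calc ∑ j, ∑ k, ‖y j - y k‖ * (μ (S j k)).toReal
        ≤ ∑ j, ∑ k, m₂ * (κ * (R ^ n * max (δ j - δ k) 0)) :=
          Finset.sum_le_sum fun j _ => Finset.sum_le_sum fun k _ => hterm j k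
      _ = m₂ * (κ * (R ^ n * ∑ j, ∑ k, max (δ j - δ k) 0)) := by
          simp only [← Finset.mul_sum]
      _ ≤ m₂ * (κ * (R ^ n * (((M : ℝ) - 1) * ∑ j, |δ j|))) := by
          refine mul_le_mul_of_nonneg_left ?_ hm₂.le
          refine mul_le_mul_of_nonneg_left ?_ hκ0
          exact mul_le_mul_of_nonneg_left hcount (pow_nonneg hR0.le n)
  calc ∫ x, ‖T g x - T g' x‖ ^ p ∂μ
      ≤ (2 * R) ^ (p - 1) * ∑ j, ∑ k, ‖y j - y k‖ * (μ (S j k)).toReal := by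
        rw [← hI]; exact hstep1
    _ ≤ (2 * R) ^ (p - 1) * (m₂ * (κ * (R ^ n * (((M : ℝ) - 1) * ∑ j, |δ j|)))) := hstep2
    _ = (2 * R) ^ (p - 1) * m₂ * κ * R ^ n * ((M : ℝ) - 1) * ∑ j, |g j - g' j| := by
        simp only [hδ]
        ring

end DRAG
end
end
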